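/- Let λ > 0 and c > 1, suppose λ/n ≥ c·‖∇Λ(η₀)‖_∞, and let η̂ be a global minimizer of η ↦ Λ(η) + (λ/n)·‖η‖₁. Let ŝ = |{j : η̂_j ≠ 0}| and let φ ≥ 0 satisfy ‖x_i'δ‖²_{2,n} ≤ φ·‖δ‖² for every δ ∈ ℝ^p with ‖δ‖₀ ≤ ŝ. Then ŝ ≤ (c²/(c−1)²)·(n/λ)²·φ·‖x_i'(η̂ − η₀)‖²_{2,n}. -/

import Mathlib

open Finset

/-- The logistic link function `G(t) = exp t / (1 + exp t)`. -/
noncomputable def logistic (t : ℝ) : ℝ := Real.exp t / (1 + Real.exp t)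

/-- Inner product `x_i'η` of the `i`-th design vector with `η`. -/
def xdot {n p : ℕ} (x : Fin n → Fin p → ℝ) (η : Fin p → ℝ) (i : Fin n) : ℝ :=
  ∑ j, x i j * η j

/-- Average logistic negative log-likelihood
`Λ(η) = (1/n)∑ᵢ [log(1+exp(x_i'η)) − y_i·(x_i'η)]`. -/
noncomputable def Lam {n p : ℕ} (x : Fin n → Fin p → ℝ) (y : Fin n → ℝ)
    (η : Fin p → ℝ) : ℝ :=
  (1 / (n : ℝ)) * ∑ i, (Real.log (1 + Real.exp (xdot x η i)) - y i * xdot x η i)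

/-- Gradient of `Λ`: `∇Λ(η) = (1/n)∑ᵢ (G(x_i'η) − y_i)·x_i`. -/
noncomputable def gradLam {n p : ℕ} (x : Fin n → Fin p → ℝ) (y : Fin n → ℝ)
    (η : Fin p → ℝ) (j : Fin p) : ℝ :=
  (1 / (n : ℝ)) * ∑ i, (logistic (xdot x η i) - y i) * x i j

/-- Sup-norm `‖∇Λ(η)‖_∞` of the gradient of `Λ`. -/
noncomputable def gradLamSup {n p : ℕ} (x : Fin n → Fin p → ℝ) (y : Fin n → ℝ)
    (η : Fin p → ℝ) : ℝ :=
  ⨆ j : Fin p, |gradLam x y η j|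

/-- The logistic weights `w_i = G(x_i'η₀)·(1 − G(x_i'η₀))`. -/
noncomputable def wgt {n p : ℕ} (x : Fin n → Fin p → ℝ) (η₀ : Fin p → ℝ) (i : Fin n) : ℝ :=
  logistic (xdot x η₀ i) * (1 - logistic (xdot x η₀ i))

/-- Weighted prediction norm `‖√w_i·x_i'δ‖_{2,n} = ((1/n)∑ᵢ w_i (x_i'δ)²)^{1/2}`. -/
noncomputable def predNorm {n p : ℕ} (x : Fin n → Fin p → ℝ) (w : Fin n → ℝ)
    (δ : Fin p → ℝ) : ℝ :=
  Real.sqrt ((1 / (n : ℝ)) * ∑ i, w i * xdot x δ i ^ 2)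

/-- Support of a coefficient vector. -/
noncomputable def supp {p : ℕ} (η : Fin p → ℝ) : Finset (Fin p) :=
  Finset.univ.filter (fun j => η j ≠ 0)

/-- ℓ1 norm of a vector in `ℝ^p`. -/
def l1norm {p : ℕ} (δ : Fin p → ℝ) : ℝ := ∑ j, |δ j|

/-- The restricted cone `Δ_c̄ = {δ : ‖δ_{T^c}‖₁ ≤ c̄·‖δ_T‖₁}` for a support set `T`. -/
noncomputable def inCone {p : ℕ} (T : Finset (Fin p)) (cbar : ℝ) (δ : Fin p → ℝ) : Prop :=
  ∑ j ∈ Tᶜ, |δ j| ≤ cbar * ∑ j ∈ T, |δ j|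

/-! At a minimiser, Fermat's rule along each coordinate of the support `T` of `η̂` gives
`|∇Λ(η̂)_j| = λ/n`, while `|∇Λ(η₀)_j| ≤ λ/(cn)`; so every coordinate of
`D = ∇Λ(η̂) − ∇Λ(η₀)` on `T` has size at least `(1 − 1/c)λ/n`, and `ŝ((c−1)λ/(cn))² ≤ ‖D_T‖²`.
Pairing `D` with `D_T` writes `‖D_T‖²` as the empirical inner product of `G(x_i'η̂) − G(x_i'η₀)`
with `x_i'D_T`; since `G` is 1-Lipschitz and `D_T` is `ŝ`-sparse, Cauchy–Schwarz gives
`‖D_T‖² ≤ φ‖x_i'(η̂ − η₀)‖²_{2,n}`. -/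

lemma logistic_eq_sigmoid : logistic = Real.sigmoid := by
  funext t
  rw [logistic, Real.sigmoid_def, Real.exp_neg]
  field_simp
  ring

lemma abs_logistic_sub_le (a b : ℝ) : |logistic a - logistic b| ≤ |a - b| := by
  have hlip : LipschitzWith 1 logistic := by
    rw [logistic_eq_sigmoid]
    refine lipschitzWith_of_nnnorm_deriv_le differentiable_sigmoid fun t => ?_
    rw [Real.deriv_sigmoid, ← NNReal.coe_le_coe, coe_nnnorm, Real.norm_eq_abs]
    have h0 := Real.sigmoid_pos t
    have h1 := Real.sigmoid_lt_one t
    rw [abs_of_pos (by nlinarith)]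
    push_cast
    nlinarith
  simpa [Real.dist_eq] using hlip.dist_le_mul a b

lemma hasDerivAt_log_one_add_exp (t : ℝ) :
    HasDerivAt (fun u => Real.log (1 + Real.exp u)) (logistic t) t := by
  simpa [logistic] using
    ((Real.hasDerivAt_exp t).const_add 1).log (by positivity : 1 + Real.exp t ≠ 0)

lemma mul_sum_mul_sq_le {ι : Type*} (s : Finset ι) (c : ℝ) (f g : ι → ℝ) :
    (c * ∑ i ∈ s, f i * g i) ^ 2 ≤ (c * ∑ i ∈ s, f i ^ 2) * (c * ∑ i ∈ s, g i ^ 2) := by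
  have := mul_le_mul_of_nonneg_left (Finset.sum_mul_sq_le_sq_mul_sq s f g) (sq_nonneg c)
  linarith

lemma l1norm_add_single {p : ℕ} (η : Fin p → ℝ) (j : Fin p) (t : ℝ) :
    l1norm (η + Pi.single j t) = l1norm η - |η j| + |η j + t| := by
  simp only [l1norm, ← Finset.sum_erase_add _ _ (Finset.mem_univ j), Pi.add_apply,
    Pi.single_eq_same]
  have : ∀ k ∈ Finset.univ.erase j, |η k + (Pi.single j t : Fin p → ℝ) k| = |η k| :=
    fun k hk => by rw [Pi.single_eq_of_ne (Finset.ne_of_mem_erase hk), add_zero]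
  rw [Finset.sum_congr rfl this]
  ring

section LogisticLoss

variable {n p : ℕ} (x : Fin n → Fin p → ℝ) (y : Fin n → ℝ)

lemma xdot_add_single (η : Fin p → ℝ) (j : Fin p) (t : ℝ) (i : Fin n) :
    xdot x (η + Pi.single j t) i = xdot x η i + x i j * t := by
  simp [xdot, mul_add, Finset.sum_add_distrib, Pi.single_apply]

lemma xdot_sub (η ζ : Fin p → ℝ) (i : Fin n) :
    xdot x (η - ζ) i = xdot x η i - xdot x ζ i := by
  simp [xdot, mul_sub, Finset.sum_sub_distrib]

lemma hasDerivAt_Lam_add_single (η : Fin p → ℝ) (j : Fin p) :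
    HasDerivAt (fun t => Lam x y (η + Pi.single j t)) (gradLam x y η j) 0 := by
  have hterm : ∀ i ∈ Finset.univ, HasDerivAt
      (fun t => Real.log (1 + Real.exp (xdot x η i + x i j * t)) - y i * (xdot x η i + x i j * t))
      ((logistic (xdot x η i) - y i) * x i j) 0 := fun i _ => by
    have hlin : HasDerivAt (fun t => xdot x η i + x i j * t) (x i j) 0 := by
      simpa using ((hasDerivAt_id (0 : ℝ)).const_mul (x i j)).const_add (xdot x η i)
    have hsp := (hasDerivAt_log_one_add_exp (xdot x η i)).comp_of_eq 0 hlin (by simp)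
    rw [sub_mul]
    exact hsp.fun_sub (hlin.const_mul (y i))
  simp only [Lam, gradLam, xdot_add_single]
  exact (HasDerivAt.fun_sum hterm).const_mul _

theorem abs_gradLam_eq_of_isMin (L : ℝ) (ηhat : Fin p → ℝ)
    (hmin : ∀ η : Fin p → ℝ, Lam x y ηhat + L * l1norm ηhat ≤ Lam x y η + L * l1norm η)
    {j : Fin p} (hj : ηhat j ≠ 0) :
    |gradLam x y ηhat j| = |L| := by
  set F : ℝ → ℝ := fun t => Lam x y (ηhat + Pi.single j t) + L * |ηhat j + t|
  have hF : IsLocalMin F 0 := Filter.Eventually.of_forall fun t => by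
    have h := hmin (ηhat + Pi.single j t)
    rw [l1norm_add_single] at h
    simp only [F, Pi.single_zero, add_zero]
    linarith
  have hF' : HasDerivAt F (gradLam x y ηhat j + L * SignType.sign (ηhat j)) 0 :=
    (hasDerivAt_Lam_add_single x y ηhat j).add
      ((HasDerivAt.comp_const_add (ηhat j) 0 (by simpa using hasDerivAt_abs hj)).const_mul L)
  have hsign : |(SignType.sign (ηhat j) : ℝ)| = 1 := by
    rcases hj.lt_or_gt with h | h <;> simp [h]
  rw [eq_neg_of_add_eq_zero_left (hF.hasDerivAt_eq_zero hF'), abs_neg, abs_mul, hsign, mul_one]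

lemma abs_gradLam_le_gradLamSup (η : Fin p → ℝ) (j : Fin p) :
    |gradLam x y η j| ≤ gradLamSup x y η :=
  le_ciSup (f := fun k => |gradLam x y η k|) (Set.finite_range _).bddAbove j

theorem le_abs_gradLam_sub_of_isMin (η₀ : Fin p → ℝ) (L c : ℝ) (hc : 0 < c)
    (hpen : c * gradLamSup x y η₀ ≤ L) (ηhat : Fin p → ℝ)
    (hmin : ∀ η : Fin p → ℝ, Lam x y ηhat + L * l1norm ηhat ≤ Lam x y η + L * l1norm η)
    {j : Fin p} (hj : ηhat j ≠ 0) :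
    (c - 1) / c * L ≤ |gradLam x y ηhat j - gradLam x y η₀ j| := by
  have hkkt := abs_gradLam_eq_of_isMin x y L ηhat hmin hj
  have hsup : |gradLam x y η₀ j| ≤ L / c := (le_div_iff₀' hc).2 <|
    (mul_le_mul_of_nonneg_left (abs_gradLam_le_gradLamSup x y η₀ j) hc.le).trans hpen
  have htri := abs_sub_abs_le_abs_sub (gradLam x y ηhat j) (gradLam x y η₀ j)
  have hL : (c - 1) / c * L = L - L / c := by field_simp
  linarith [le_abs_self L]

lemma sum_mul_gradLam_sub (η η' v : Fin p → ℝ) :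
    ∑ j, v j * (gradLam x y η j - gradLam x y η' j)
      = (1 / (n : ℝ)) * ∑ i, (logistic (xdot x η i) - logistic (xdot x η' i)) * xdot x v i := by
  simp only [gradLam, xdot, ← mul_sub, ← Finset.sum_sub_distrib, Finset.mul_sum]
  rw [Finset.sum_comm]
  refine Finset.sum_congr rfl fun i _ => Finset.sum_congr rfl fun j _ => ?_
  ring

lemma mean_sq_logistic_sub_le (η η' : Fin p → ℝ) :
    (1 / (n : ℝ)) * ∑ i, (logistic (xdot x η i) - logistic (xdot x η' i)) ^ 2
      ≤ (1 / (n : ℝ)) * ∑ i, xdot x (η - η') i ^ 2 := by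
  refine mul_le_mul_of_nonneg_left (Finset.sum_le_sum fun i _ => ?_) (by positivity)
  rw [xdot_sub, ← sq_abs, ← sq_abs (_ - _)]
  exact pow_le_pow_left₀ (abs_nonneg _) (abs_logistic_sub_le _ _) 2

theorem sum_sq_gradLam_sub_le (T : Finset (Fin p)) (φ : ℝ) (hφ : 0 ≤ φ)
    (hφbound : ∀ δ : Fin p → ℝ, supp δ ⊆ T →
      (1 / (n : ℝ)) * ∑ i, xdot x δ i ^ 2 ≤ φ * ∑ j, δ j ^ 2)
    (η η' : Fin p → ℝ) :
    ∑ j ∈ T, (gradLam x y η j - gradLam x y η' j) ^ 2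
      ≤ φ * ((1 / (n : ℝ)) * ∑ i, xdot x (η - η') i ^ 2) := by
  set D : Fin p → ℝ := fun j => gradLam x y η j - gradLam x y η' j
  set B := ∑ j ∈ T, D j ^ 2
  set Q := (1 / (n : ℝ)) * ∑ i, xdot x (η - η') i ^ 2
  set v : Fin p → ℝ := fun j => if j ∈ T then D j else 0
  have hvD : ∑ j, v j * D j = B := by
    simp only [v, ite_mul, zero_mul, Finset.sum_ite_mem, Finset.univ_inter, B, sq]
  have hvv : ∑ j, v j ^ 2 = B := by
    simp only [v, ite_pow, zero_pow two_ne_zero, Finset.sum_ite_mem, Finset.univ_inter, B]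
  have hv : supp v ⊆ T := fun j hj => by
    by_contra h
    simp [supp, v, h] at hj
  have hB : B ^ 2 ≤ Q * (φ * B) := calc
    B ^ 2 ≤ ((1 / (n : ℝ)) * ∑ i, (logistic (xdot x η i) - logistic (xdot x η' i)) ^ 2)
        * ((1 / (n : ℝ)) * ∑ i, xdot x v i ^ 2) := by
      rw [← hvD, sum_mul_gradLam_sub]
      exact mul_sum_mul_sq_le _ _ _ _
    _ ≤ Q * (φ * B) := by
      rw [← hvv]
      exact mul_le_mul (mean_sq_logistic_sub_le x η η') (hφbound v hv) (by positivity)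
        (by positivity)
  rcases (show 0 ≤ B by positivity).eq_or_lt with h | h
  · rw [← h]; positivity
  · nlinarith

end LogisticLoss

theorem lasso_logistic_sparsity_general {n p : ℕ} (hn : 0 < n)
    (x : Fin n → Fin p → ℝ) (y : Fin n → ℝ)
    (η₀ : Fin p → ℝ)
    (lam c : ℝ) (hlam : 0 < lam) (hc : 1 < c)
    (hpen : c * gradLamSup x y η₀ ≤ lam / (n : ℝ))
    (ηhat : Fin p → ℝ)
    (hmin : ∀ η : Fin p → ℝ,
      Lam x y ηhat + (lam / (n : ℝ)) * l1norm ηhat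
        ≤ Lam x y η + (lam / (n : ℝ)) * l1norm η)
    (φ : ℝ) (hφ : 0 ≤ φ)
    (hφbound : ∀ δ : Fin p → ℝ, (supp δ).card ≤ (supp ηhat).card →
      (1 / (n : ℝ)) * ∑ i, xdot x δ i ^ 2 ≤ φ * ∑ j, δ j ^ 2) :
    ((supp ηhat).card : ℝ)
      ≤ (c ^ 2 / (c - 1) ^ 2) * ((n : ℝ) / lam) ^ 2 * φ
          * ((1 / (n : ℝ)) * ∑ i, xdot x (ηhat - η₀) i ^ 2) := by
  have hn' : (0 : ℝ) < n := by exact_mod_cast hn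
  have hK : 0 < ((c - 1) / c * (lam / n)) ^ 2 := by
    have : 0 < c - 1 := by linarith
    positivity
  have hgap : ∀ j ∈ supp ηhat,
      ((c - 1) / c * (lam / n)) ^ 2 ≤ (gradLam x y ηhat j - gradLam x y η₀ j) ^ 2 :=
    fun j hj => by
      rw [← sq_abs (_ - _)]
      exact pow_le_pow_left₀ (by positivity) (le_abs_gradLam_sub_of_isMin x y η₀ _ c
        (by linarith) hpen ηhat hmin (by simpa [supp] using hj)) 2
  have hsum := (Finset.card_nsmul_le_sum _ _ _ hgap).trans
    (sum_sq_gradLam_sub_le x y (supp ηhat) φ hφ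
      (fun δ hδ => hφbound δ (Finset.card_le_card hδ)) ηhat η₀)
  rw [nsmul_eq_mul, ← le_div_iff₀ hK] at hsum
  refine hsum.trans_eq ?_
  field_simp

/-- First sparsity bound for the ℓ1-penalized logistic regression estimator
(Lemma B.6, first relation): with `λ/n ≥ c‖∇Λ(η₀)‖_∞`, `c > 1`, and `φ` a maximal
sparse eigenvalue valid at sparsity level `ŝ = ‖η̂‖₀`, one has
`ŝ ≤ (c²/(c−1)²)(n/λ)²·φ·‖x_i'(η̂−η₀)‖²_{2,n}`. -/
theorem lasso_logistic_sparsity {n p : ℕ} (hn : 0 < n) (hp : 0 < p)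
    (x : Fin n → Fin p → ℝ) (y : Fin n → ℝ) (hy : ∀ i, y i = 0 ∨ y i = 1)
    (η₀ : Fin p → ℝ) (hs : 1 ≤ (supp η₀).card)
    (lam c : ℝ) (hlam : 0 < lam) (hc : 1 < c)
    (hpen : c * gradLamSup x y η₀ ≤ lam / (n : ℝ))
    (ηhat : Fin p → ℝ)
    (hmin : ∀ η : Fin p → ℝ,
      Lam x y ηhat + (lam / (n : ℝ)) * l1norm ηhat
        ≤ Lam x y η + (lam / (n : ℝ)) * l1norm η)
    (φ : ℝ) (hφ : 0 ≤ φ)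
    (hφbound : ∀ δ : Fin p → ℝ, (supp δ).card ≤ (supp ηhat).card →
      (1 / (n : ℝ)) * ∑ i, xdot x δ i ^ 2 ≤ φ * ∑ j, δ j ^ 2) :
    ((supp ηhat).card : ℝ)
      ≤ (c ^ 2 / (c - 1) ^ 2) * ((n : ℝ) / lam) ^ 2 * φ
          * ((1 / (n : ℝ)) * ∑ i, xdot x (ηhat - η₀) i ^ 2) :=
  lasso_logistic_sparsity_general hn x y η₀ lam c hlam hc hpen ηhat hmin φ hφ hφbound
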